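/- arXiv:1912.05069 — 2 statements merged into one kernel-verified Lean document; each statement's English description precedes it below -/
import Mathlib

section
/- Asymptotics of Ψ along the centering m(t). Let g : [0,∞) → [0,∞) be measurable with C_r := √(2/π) ∫_0^∞ g(y) y e^{√2 y} dy < ∞. Fix r > 0, let z > 0 and let z(·) be a positive function with z(t) → z as t → ∞. Then lim_{t→∞} Ψ_g(r,t, m(t) + z(t)) = C_r · z · e^{−√2 z}. -/
/-!
Write `x = m(t) + z(t)`. Then `Ψ_g(r,t,x)` is the integral over `y > 0` of the integrable weight
`g(y) y e^{√2 y}` against a kernel `k_t(y)` (`psiKernel`). The `-(3/(2√2)) log t` in `m(t)` turns the prefactor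
`e^{-√2(x - √2 t)}` into `e^{-√2 z(t)} t^{3/2}`, which cancels the `(t - r)^{3/2}` produced by
`√(2π(t - r))` and by `1 - e^{-2 z(t) y/(t - r)} ≈ 2 z(t) y/(t - r)`; the Gaussian factor tends to `1`
because `(log t)^2 = o(t)`. So `k_t(y) → √(2/π) z e^{-√2 z}` for each `y > 0`, while
`0 ≤ 1 - e^{-u} ≤ u` bounds `k_t` uniformly in `y`, and dominated convergence concludes.
-/

open MeasureTheory Set Filter Topology

/-- The centering term m(t) = √2 t − (3/(2√2)) log t. -/
noncomputable def mFun (t : ℝ) : ℝ :=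
  Real.sqrt 2 * t - 3 / (2 * Real.sqrt 2) * Real.log t

/-- The quantity Ψ_g(r,t,x) built from a measurable g : [0,∞) → [0,∞). -/
noncomputable def PsiG (g : ℝ → ℝ) (r t x : ℝ) : ℝ :=
  Real.exp (-(Real.sqrt 2 * (x - Real.sqrt 2 * t))) / Real.sqrt (2 * Real.pi * (t - r)) *
    ∫ y in Ioi (0 : ℝ),
      g y * Real.exp (Real.sqrt 2 * y) *
        Real.exp (-(x - Real.sqrt 2 * t - y) ^ 2 / (2 * (t - r))) *
        (1 - Real.exp (-(2 * (x - mFun t) * y) / (t - r)))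

open Real

theorem tendsto_integral_mul_of_tendsto_of_abs_le {ι α : Type*} [MeasurableSpace α]
    {μ : Measure α} {l : Filter ι} [l.IsCountablyGenerated] {w f : α → ℝ} {k : ι → α → ℝ}
    {M : ℝ} (hw : Integrable w μ) (hk_meas : ∀ᶠ i in l, AEStronglyMeasurable (k i) μ)
    (hk_le : ∀ᶠ i in l, ∀ᵐ a ∂μ, |k i a| ≤ M)
    (hk_lim : ∀ᵐ a ∂μ, Tendsto (fun i => k i a) l (𝓝 (f a))) :
    Tendsto (fun i => ∫ a, w a * k i a ∂μ) l (𝓝 (∫ a, w a * f a ∂μ)) := by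
  refine tendsto_integral_filter_of_dominated_convergence (fun a => ‖w a‖ * M)
    (hk_meas.mono fun i hi => hw.aestronglyMeasurable.mul hi) ?_ (hw.norm.mul_const M)
    (hk_lim.mono fun a ha => ha.const_mul (w a))
  filter_upwards [hk_le] with i hi
  filter_upwards [hi] with a ha
  rw [norm_mul, Real.norm_eq_abs (k i a)]
  exact mul_le_mul_of_nonneg_left ha (norm_nonneg _)

theorem tendsto_one_sub_exp_neg_div_self :
    Tendsto (fun u : ℝ => (1 - exp (-u)) / u) (𝓝[≠] 0) (𝓝 1) := by
  have hd : HasDerivAt (fun u : ℝ => 1 - exp (-u)) 1 0 := by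
    simpa using ((hasDerivAt_exp _).comp 0 (hasDerivAt_neg 0)).const_sub 1
  refine (hasDerivAt_iff_tendsto_slope.mp hd).congr fun u => ?_
  simp [slope_def_field]

theorem abs_one_sub_exp_neg_div_self_le_one {u : ℝ} (hu : 0 ≤ u) :
    |(1 - exp (-u)) / u| ≤ 1 := by
  have h0 : 0 ≤ 1 - exp (-u) := by
    simpa using exp_le_one_iff.mpr (neg_nonpos.mpr hu)
  have h1 : 1 - exp (-u) ≤ u := by linarith [add_one_le_exp (-u)]
  rw [abs_of_nonneg (div_nonneg h0 hu)]
  exact div_le_one_of_le₀ h1 hu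

theorem tendsto_sq_sub_mul_log_div_sub {a : ℝ → ℝ} {a₀ : ℝ} (ha : Tendsto a atTop (𝓝 a₀))
    (c r : ℝ) : Tendsto (fun t => (a t - c * log t) ^ 2 / (t - r)) atTop (𝓝 0) := by
  have hinv : Tendsto (fun t : ℝ => (t - r)⁻¹) atTop (𝓝 0) :=
    (tendsto_atTop_add_const_right _ (-r) tendsto_id).inv_tendsto_atTop
  have hlog (n : ℕ) : Tendsto (fun t => log t ^ n / (t - r)) atTop (𝓝 0) := by
    simpa [sub_eq_add_neg] using tendsto_pow_log_div_mul_add_atTop 1 (-r) n one_ne_zero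
  have h := (((ha.pow 2).mul hinv).sub ((ha.const_mul (2 * c)).mul (hlog 1))).add
    ((hlog 2).const_mul (c ^ 2))
  simp only [mul_zero, sub_zero, add_zero] at h
  refine h.congr fun t => ?_
  simp only [div_eq_mul_inv]
  ring

theorem tendsto_self_div_self_sub_const (r : ℝ) :
    Tendsto (fun t : ℝ => t / (t - r)) atTop (𝓝 1) := by
  have h : Tendsto (fun t : ℝ => (1 - r / t)⁻¹) atTop (𝓝 (1 - 0)⁻¹) :=
    ((tendsto_const_nhds.div_atTop tendsto_id).const_sub 1).inv₀ (by norm_num)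
  rw [sub_zero, inv_one] at h
  refine h.congr' ?_
  filter_upwards [eventually_gt_atTop 0] with t ht
  field_simp

theorem tendsto_mul_sqrt_div_mul_sqrt_sub_const (r : ℝ) :
    Tendsto (fun t : ℝ => t * √t / ((t - r) * √(t - r))) atTop (𝓝 1) := by
  have h : Tendsto (fun t : ℝ => t / (t - r) * √(t / (t - r))) atTop (𝓝 (1 * √1)) :=
    (tendsto_self_div_self_sub_const r).mul
      ((continuous_sqrt.tendsto 1).comp (tendsto_self_div_self_sub_const r))
  rw [sqrt_one, one_mul] at h
  refine h.congr' ?_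
  filter_upwards [eventually_gt_atTop 0] with t ht
  rw [sqrt_div ht.le, div_mul_div_comm]

theorem sqrt_two_div_pi_eq : √(2 / π) = 2 / √(2 * π) := by
  rw [eq_div_iff (by positivity), ← sqrt_mul (by positivity)]
  rw [show 2 / π * (2 * π) = 2 ^ 2 by field_simp, sqrt_sq zero_le_two]

noncomputable def psiKernel (r t x y : ℝ) : ℝ :=
  exp (-(√2 * (x - √2 * t))) / √(2 * π * (t - r)) *
    exp (-(x - √2 * t - y) ^ 2 / (2 * (t - r))) *
    ((1 - exp (-(2 * (x - mFun t) * y) / (t - r))) / y)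

theorem measurable_psiKernel (r t x : ℝ) : Measurable (psiKernel r t x) := by
  unfold psiKernel
  fun_prop

theorem psiG_eq_setIntegral_mul_psiKernel (g : ℝ → ℝ) (r t x : ℝ) :
    PsiG g r t x = ∫ y in Ioi 0, g y * (y * exp (√2 * y)) * psiKernel r t x y := by
  rw [PsiG, ← integral_const_mul]
  refine setIntegral_congr_fun measurableSet_Ioi fun y (hy : 0 < y) => ?_
  simp only [psiKernel]
  field_simp

theorem exp_neg_sqrt_two_mul_mFun_add_sub {t : ℝ} (ht : 0 < t) (s : ℝ) :
    exp (-(√2 * (mFun t + s - √2 * t))) = exp (-(√2 * s)) * (t * √t) := by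
  have hlog : -(√2 * (mFun t + s - √2 * t)) = -(√2 * s) + (log t + log √t) := by
    rw [log_sqrt ht.le, mFun]
    field_simp
    ring
  rw [hlog, exp_add, exp_add, exp_log ht, exp_log (sqrt_pos.mpr ht)]

theorem psiKernel_mFun_add {r t s y : ℝ} (ht : 0 < t) (htr : r < t) (hs : s ≠ 0) (hy : y ≠ 0) :
    psiKernel r t (mFun t + s) y =
      exp (-(√2 * s)) * exp (-((s - y - 3 / (2 * √2) * log t) ^ 2 / (t - r) / 2)) *
        ((1 - exp (-(2 * s * y / (t - r)))) / (2 * s * y / (t - r))) *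
        (√(2 / π) * s * (t * √t / ((t - r) * √(t - r)))) := by
  have htr' : 0 < t - r := sub_pos.mpr htr
  have hx : mFun t + s - √2 * t = s - 3 / (2 * √2) * log t := by rw [mFun]; ring
  rw [psiKernel, exp_neg_sqrt_two_mul_mFun_add_sub ht, hx, add_sub_cancel_left,
    sqrt_mul (by positivity), sqrt_two_div_pi_eq]
  field_simp
  ring_nf

section Centering

variable {r z : ℝ} {zf : ℝ → ℝ}

theorem tendsto_psiKernel_mFun_add (hzf_pos : ∀ t, 0 < zf t) (hzf : Tendsto zf atTop (𝓝 z))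
    {y : ℝ} (hy : 0 < y) :
    Tendsto (fun t => psiKernel r t (mFun t + zf t) y) atTop
      (𝓝 (√(2 / π) * (z * exp (-(√2 * z))))) := by
  have hexp : Tendsto (fun t => exp (-(√2 * zf t))) atTop (𝓝 (exp (-(√2 * z)))) :=
    (continuous_exp.tendsto _).comp (hzf.const_mul √2).neg
  have hgauss : Tendsto (fun t => exp (-((zf t - y - 3 / (2 * √2) * log t) ^ 2 / (t - r) / 2)))
      atTop (𝓝 1) := by
    simpa [Function.comp_def] using (continuous_exp.tendsto _).comp
      ((tendsto_sq_sub_mul_log_div_sub (hzf.sub_const y) _ r).div_const 2).neg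
  have hu : Tendsto (fun t => 2 * zf t * y / (t - r)) atTop (𝓝[≠] 0) := by
    refine tendsto_nhdsWithin_of_tendsto_nhds_of_eventually_within _ ?_ ?_
    · simpa [sub_eq_add_neg] using ((hzf.const_mul 2).mul_const y).div_atTop
        (tendsto_atTop_add_const_right _ (-r) tendsto_id)
    · filter_upwards [eventually_gt_atTop r] with t ht
      have := hzf_pos t
      exact (div_pos (by positivity) (sub_pos.mpr ht)).ne'
  have h := ((hexp.mul hgauss).mul (tendsto_one_sub_exp_neg_div_self.comp hu)).mul
    ((hzf.const_mul √(2 / π)).mul (tendsto_mul_sqrt_div_mul_sqrt_sub_const r))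
  rw [mul_one, mul_one, mul_one] at h
  convert h.congr' ?_ using 2
  · ring
  filter_upwards [eventually_gt_atTop (max 0 r)] with t ht
  rw [max_lt_iff] at ht
  exact (psiKernel_mFun_add ht.1 ht.2 (hzf_pos t).ne' hy.ne').symm

theorem exists_abs_psiKernel_mFun_add_le (r : ℝ) (hzf_pos : ∀ t, 0 < zf t)
    (hzf : Tendsto zf atTop (𝓝 z)) :
    ∃ M, ∀ᶠ t in atTop, ∀ y, 0 < y → |psiKernel r t (mFun t + zf t) y| ≤ M := by
  have hB := (hzf.const_mul √(2 / π)).mul (tendsto_mul_sqrt_div_mul_sqrt_sub_const r)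
  refine ⟨√(2 / π) * z * 1 + 1, ?_⟩
  filter_upwards [eventually_gt_atTop (max 0 r), hB.eventually (eventually_le_nhds (lt_add_one _))]
    with t ht hBt y hy
  obtain ⟨ht0, hrt⟩ := max_lt_iff.mp ht
  have hs := hzf_pos t
  have htr := sub_pos.mpr hrt
  rw [psiKernel_mFun_add ht0 hrt hs.ne' hy.ne', abs_mul, abs_mul, abs_mul,
    abs_of_pos (exp_pos _), abs_of_pos (exp_pos _)]
  calc _ ≤ 1 * 1 * 1 * |√(2 / π) * zf t * (t * √t / ((t - r) * √(t - r)))| := by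
        gcongr
        · exact exp_le_one_iff.mpr (by simp; positivity)
        · exact exp_le_one_iff.mpr (by simp; positivity)
        · exact abs_one_sub_exp_neg_div_self_le_one (by positivity)
    _ ≤ _ := by
        rw [one_mul, one_mul, one_mul, abs_of_nonneg (by positivity)]
        exact hBt

end Centering

theorem psiG_asymptotics_centering_general
    (g : ℝ → ℝ)
    (hint : IntegrableOn (fun y => g y * (y * Real.exp (Real.sqrt 2 * y))) (Ioi 0))
    (r : ℝ) (z : ℝ)
    (zf : ℝ → ℝ) (hzf_pos : ∀ t : ℝ, 0 < zf t) (hzf : Tendsto zf atTop (𝓝 z)) :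
    Tendsto (fun t : ℝ => PsiG g r t (mFun t + zf t)) atTop
      (𝓝 (Real.sqrt (2 / Real.pi) *
          (∫ y in Ioi (0 : ℝ), g y * (y * Real.exp (Real.sqrt 2 * y))) *
        (z * Real.exp (-(Real.sqrt 2 * z))))) := by
  obtain ⟨M, hM⟩ := exists_abs_psiKernel_mFun_add_le r hzf_pos hzf
  have h := tendsto_integral_mul_of_tendsto_of_abs_le hint
    (.of_forall fun t => (measurable_psiKernel r t _).aestronglyMeasurable)
    (hM.mono fun t ht => (ae_restrict_iff' measurableSet_Ioi).mpr (.of_forall ht))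
    ((ae_restrict_iff' measurableSet_Ioi).mpr
      (.of_forall fun y hy => tendsto_psiKernel_mFun_add (r := r) hzf_pos hzf hy))
  simp_rw [psiG_eq_setIntegral_mul_psiKernel, integral_mul_const] at h ⊢
  convert h using 2
  ring

/-- Asymptotics of Ψ along the centering m(t): if z(t) → z > 0 with z(·) positive, then
lim_{t→∞} Ψ_g(r,t,m(t) + z(t)) = C_r z e^{−√2 z},
where C_r = √(2/π) ∫₀^∞ g(y) y e^{√2 y} dy < ∞. -/
theorem psiG_asymptotics_centering
    (g : ℝ → ℝ) (hmeas : Measurable g) (hpos : ∀ y : ℝ, 0 ≤ y → 0 ≤ g y)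
    (hint : IntegrableOn (fun y => g y * (y * Real.exp (Real.sqrt 2 * y))) (Ioi 0))
    (r : ℝ) (hr : 0 < r) (z : ℝ) (hz : 0 < z)
    (zf : ℝ → ℝ) (hzf_pos : ∀ t : ℝ, 0 < zf t) (hzf : Tendsto zf atTop (𝓝 z)) :
    Tendsto (fun t : ℝ => PsiG g r t (mFun t + zf t)) atTop
      (𝓝 (Real.sqrt (2 / Real.pi) *
          (∫ y in Ioi (0 : ℝ), g y * (y * Real.exp (Real.sqrt 2 * y))) *
        (z * Real.exp (-(Real.sqrt 2 * z))))) :=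
  psiG_asymptotics_centering_general g hint r z zf hzf_pos hzf
end

section
/- Logarithmic gradient estimate for solutions of the stable ODE (Step 6 of Lemma 4.2). Let a > 0, b > 0, ϑ ∈ (0,1], A > 0 and let c₁ > 0 be a constant. Suppose h : (−A,A) → ℝ is an even, twice continuously differentiable function satisfying (1/2) h″(x) = −a h(x) + b h(x)^{1+ϑ}, together with the bounds (a/b)^{1/ϑ} ≤ h(x) ≤ (a/b)^{1/ϑ} (1 + c₁ A^{2/ϑ} (A² − x²)^{−2/ϑ}) for all |x| < A. Then h′ is nondecreasing on (−A,A), and 0 ≤ h′(x)/h(x) ≤ 2 a c₁^ϑ / (A − x) for all x ∈ [0,A). -/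
/-!
On the range h ≥ (a/b)^{1/ϑ} the mechanism ψ̃(y) = −a y + b y^{1+ϑ} is nonnegative, so h is convex
and h′ is nondecreasing. Evenness forces h′(0) = 0, hence h′ ≥ 0 and h is nondecreasing on [0, A).
Writing ψ̃(y) = y (b y^ϑ − a), the upper bound on h and the subadditivity of y ↦ y^ϑ give
h″(t) ≤ 2 a c₁^ϑ h(t) / (A − t)², and h(t) ≤ h(x) for t ≤ x. Comparing h′ on [0, x] with
t ↦ 2 a c₁^ϑ h(x) / (A − t), whose derivative is the right-hand side, yields
h′(x) ≤ 2 a c₁^ϑ h(x) / (A − x).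
-/

open Set Filter Topology

lemma deriv_eq_zero_of_even {f : ℝ → ℝ} (hf : (fun y => f (-y)) =ᶠ[𝓝 0] f) :
    deriv f 0 = 0 := by
  have h := hf.deriv_eq
  rw [deriv_comp_neg, neg_zero] at h
  linarith

lemma sub_le_of_deriv_le_div_sq {g : ℝ → ℝ} {A K p q : ℝ} (hpq : p ≤ q) (hqA : q < A)
    (hg : ContinuousOn g (Icc p q)) (hg' : DifferentiableOn ℝ g (Ioo p q))
    (hbound : ∀ t ∈ Ioo p q, deriv g t ≤ K / (A - t) ^ 2) :
    g q - g p ≤ K * ((A - q)⁻¹ - (A - p)⁻¹) := by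
  have hne : ∀ t ∈ Icc p q, A - t ≠ 0 := fun t ht => sub_ne_zero.2 (by linarith [ht.2])
  have hbarrier : ∀ t ∈ Ioo p q, HasDerivAt (fun s => K * (A - s)⁻¹) (K / (A - t) ^ 2) t := by
    intro t ht
    refine (((hasDerivAt_id t).const_sub A).inv (hne t (Ioo_subset_Icc_self ht))).const_mul K
      |>.congr_deriv ?_
    simp only [id, div_eq_mul_inv]
    ring
  have hg_at : ∀ t ∈ Ioo p q, DifferentiableAt ℝ g t := fun t ht =>
    hg'.differentiableAt (Ioo_mem_nhds ht.1 ht.2)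
  have hmono : MonotoneOn (fun s => K * (A - s)⁻¹ - g s) (Icc p q) := by
    apply monotoneOn_of_deriv_nonneg (convex_Icc p q)
    · exact (continuousOn_const.mul ((continuousOn_const.sub continuousOn_id).inv₀ hne)).sub hg
    · rw [interior_Icc]
      exact fun t ht => ((hbarrier t ht).differentiableAt.sub (hg_at t ht)).differentiableWithinAt
    · rw [interior_Icc]
      intro t ht
      rw [((hbarrier t ht).fun_sub (hg_at t ht).hasDerivAt).deriv]
      linarith [hbound t ht]
  have := hmono ⟨le_rfl, hpq⟩ ⟨hpq, le_rfl⟩ hpq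
  simp only at this
  linarith

lemma monotoneOn_deriv_of_deriv2_nonneg {f : ℝ → ℝ} {l r : ℝ}
    (hf : ContDiffOn ℝ 2 f (Ioo l r)) (hf'' : ∀ t ∈ Ioo l r, 0 ≤ deriv (deriv f) t) :
    MonotoneOn (deriv f) (Ioo l r) := by
  have hf' : ContDiffOn ℝ 1 (deriv f) (Ioo l r) := hf.deriv_of_isOpen isOpen_Ioo (by norm_num)
  refine monotoneOn_of_deriv_nonneg (convex_Ioo l r) hf'.continuousOn ?_ ?_ <;> rw [interior_Ioo]
  · exact hf'.differentiableOn one_ne_zero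
  · exact hf''

section EvenConvex

variable {f : ℝ → ℝ} {A : ℝ}

lemma deriv_eq_zero_of_even_on_Ioo (heven : ∀ x, |x| < A → f (-x) = f x) (hA : 0 < A) :
    deriv f 0 = 0 :=
  deriv_eq_zero_of_even <| by
    filter_upwards [Ioo_mem_nhds (neg_neg_of_pos hA) hA] with y hy
    exact heven y (abs_lt.2 hy)

lemma deriv_nonneg_of_even_of_monotoneOn_deriv (heven : ∀ x, |x| < A → f (-x) = f x)
    (hmono : MonotoneOn (deriv f) (Ioo (-A) A)) {t : ℝ} (ht : t ∈ Ico 0 A) :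
    0 ≤ deriv f t := by
  have hA : 0 < A := ht.1.trans_lt ht.2
  have hf0 : deriv f 0 = 0 := deriv_eq_zero_of_even_on_Ioo heven hA
  simpa [hf0] using hmono ⟨neg_neg_of_pos hA, hA⟩ ⟨by linarith [ht.1], ht.2⟩ ht.1

lemma monotoneOn_Ico_of_even_of_monotoneOn_deriv (hf : ContDiffOn ℝ 1 f (Ioo (-A) A))
    (heven : ∀ x, |x| < A → f (-x) = f x) (hmono : MonotoneOn (deriv f) (Ioo (-A) A)) :
    MonotoneOn f (Ico 0 A) := by
  have hsub : Ico 0 A ⊆ Ioo (-A) A := fun t ht => ⟨by linarith [ht.1, ht.2], ht.2⟩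
  refine monotoneOn_of_deriv_nonneg (convex_Ico 0 A) (hf.continuousOn.mono hsub) ?_ ?_ <;>
    rw [interior_Ico]
  · exact (hf.differentiableOn one_ne_zero).mono (Ioo_subset_Ico_self.trans hsub)
  · exact fun t ht => deriv_nonneg_of_even_of_monotoneOn_deriv heven hmono (Ioo_subset_Ico_self ht)

lemma deriv_le_of_deriv2_le_mul_div_sq (hf : ContDiffOn ℝ 2 f (Ioo (-A) A))
    (heven : ∀ x, |x| < A → f (-x) = f x) (hmono : MonotoneOn f (Ico 0 A)) {κ x : ℝ}
    (hκ : 0 ≤ κ) (hf'' : ∀ t ∈ Ico 0 A, deriv (deriv f) t ≤ κ * f t / (A - t) ^ 2)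
    (hx : x ∈ Ico 0 A) (hfx : 0 ≤ f x) : deriv f x ≤ κ * f x / (A - x) := by
  have hA : 0 < A := hx.1.trans_lt hx.2
  have hf0 : deriv f 0 = 0 := deriv_eq_zero_of_even_on_Ioo heven hA
  have hf' : ContDiffOn ℝ 1 (deriv f) (Ioo (-A) A) := hf.deriv_of_isOpen isOpen_Ioo (by norm_num)
  have hIcc : Icc 0 x ⊆ Ioo (-A) A := fun t ht => ⟨by linarith [ht.1], ht.2.trans_lt hx.2⟩
  have hcompare := sub_le_of_deriv_le_div_sq (K := κ * f x) hx.1 hx.2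
    (hf'.continuousOn.mono hIcc)
    ((hf'.differentiableOn one_ne_zero).mono (Ioo_subset_Icc_self.trans hIcc)) fun t ht => by
      have ht' : t ∈ Ico 0 A := ⟨ht.1.le, ht.2.trans hx.2⟩
      calc deriv (deriv f) t ≤ κ * f t / (A - t) ^ 2 := hf'' t ht'
        _ ≤ κ * f x / (A - t) ^ 2 := by gcongr; exact hmono ht' hx ht.2.le
  have hA_term : 0 ≤ κ * f x * (A - 0)⁻¹ := by positivity
  rw [hf0] at hcompare
  rw [div_eq_mul_inv]
  linarith

end EvenConvex

lemma div_sq_sub_sq_le_inv_sub {A t : ℝ} (ht : 0 ≤ t) (htA : t < A) :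
    A / (A ^ 2 - t ^ 2) ≤ (A - t)⁻¹ := by
  have hAt : 0 < A - t := by linarith
  rw [div_le_iff₀ (by nlinarith), inv_mul_eq_div, le_div_iff₀ hAt]
  nlinarith

lemma barrier_rpow_le {ϑ c₁ A t : ℝ} (hϑ : 0 < ϑ) (hc₁ : 0 ≤ c₁) (ht : 0 ≤ t) (htA : t < A) :
    (c₁ * A ^ (2 / ϑ) * (A ^ 2 - t ^ 2) ^ (-(2 / ϑ))) ^ ϑ ≤ c₁ ^ ϑ / (A - t) ^ 2 := by
  have hA : 0 < A := ht.trans_lt htA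
  have hA2 : 0 < A ^ 2 - t ^ 2 := by nlinarith
  have hratio : A ^ (2 / ϑ) * (A ^ 2 - t ^ 2) ^ (-(2 / ϑ)) = (A / (A ^ 2 - t ^ 2)) ^ (2 / ϑ) := by
    rw [Real.rpow_neg hA2.le, Real.div_rpow hA.le hA2.le, div_eq_mul_inv (A ^ (2 / ϑ))]
  have hpow : ((A / (A ^ 2 - t ^ 2)) ^ (2 / ϑ)) ^ ϑ = (A / (A ^ 2 - t ^ 2)) ^ 2 := by
    rw [← Real.rpow_mul (by positivity), div_mul_cancel₀ _ hϑ.ne', Real.rpow_two]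
  rw [mul_assoc, hratio, Real.mul_rpow hc₁ (by positivity), hpow, div_eq_mul_inv _ ((A - t) ^ 2),
    ← inv_pow]
  gcongr
  exact div_sq_sub_sq_le_inv_sub ht htA

noncomputable def stableMechanism (a b ϑ y : ℝ) : ℝ := -a * y + b * y ^ (1 + ϑ)

section StableMechanism

variable {a b ϑ y : ℝ}

lemma stableMechanism_eq (hy : 0 < y) : stableMechanism a b ϑ y = y * (b * y ^ ϑ - a) := by
  rw [stableMechanism, Real.rpow_add hy, Real.rpow_one]
  ring

lemma stableMechanism_nonneg (ha : 0 < a) (hb : 0 < b) (hϑ : 0 < ϑ)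
    (hy : (a / b) ^ (1 / ϑ) ≤ y) : 0 ≤ stableMechanism a b ϑ y := by
  have hy₀ : 0 < y := (Real.rpow_pos_of_pos (div_pos ha hb) _).trans_le hy
  have hab : a / b ≤ y ^ ϑ := by
    calc a / b = ((a / b) ^ (1 / ϑ)) ^ ϑ := by
          rw [one_div, Real.rpow_inv_rpow (div_pos ha hb).le hϑ.ne']
      _ ≤ y ^ ϑ := Real.rpow_le_rpow (by positivity) hy hϑ.le
  rw [stableMechanism_eq hy₀]
  exact mul_nonneg hy₀.le (sub_nonneg.2 ((div_le_iff₀' hb).1 hab))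

lemma stableMechanism_le (ha : 0 < a) (hb : 0 < b) (hϑ : 0 < ϑ) (hϑ₁ : ϑ ≤ 1) {E : ℝ}
    (hy : 0 < y) (hE : 0 ≤ E) (hyE : y ≤ (a / b) ^ (1 / ϑ) * (1 + E)) :
    stableMechanism a b ϑ y ≤ a * E ^ ϑ * y := by
  have hb_rpow : b * y ^ ϑ ≤ a * (1 + E) ^ ϑ := by
    calc b * y ^ ϑ ≤ b * ((a / b) ^ (1 / ϑ) * (1 + E)) ^ ϑ := by gcongr
      _ = a * (1 + E) ^ ϑ := by
        rw [Real.mul_rpow (by positivity) (by positivity), one_div,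
          Real.rpow_inv_rpow (div_pos ha hb).le hϑ.ne']
        field_simp
  have hsub : (1 + E) ^ ϑ ≤ 1 + E ^ ϑ := by
    simpa using Real.rpow_add_le_add_rpow zero_le_one hE hϑ.le hϑ₁
  rw [stableMechanism_eq hy]
  nlinarith [mul_le_mul_of_nonneg_left hsub ha.le]

lemma stableMechanism_le_of_le_barrier (ha : 0 < a) (hb : 0 < b) (hϑ : 0 < ϑ) (hϑ₁ : ϑ ≤ 1)
    {c₁ A t : ℝ} (hc₁ : 0 ≤ c₁) (ht : 0 ≤ t) (htA : t < A) (hy : 0 < y)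
    (hyE : y ≤ (a / b) ^ (1 / ϑ) * (1 + c₁ * A ^ (2 / ϑ) * (A ^ 2 - t ^ 2) ^ (-(2 / ϑ)))) :
    stableMechanism a b ϑ y ≤ a * c₁ ^ ϑ / (A - t) ^ 2 * y := by
  have hE : 0 ≤ c₁ * A ^ (2 / ϑ) * (A ^ 2 - t ^ 2) ^ (-(2 / ϑ)) :=
    mul_nonneg (mul_nonneg hc₁ (Real.rpow_nonneg (by linarith) _))
      (Real.rpow_nonneg (by nlinarith) _)
  calc stableMechanism a b ϑ y
      ≤ a * (c₁ * A ^ (2 / ϑ) * (A ^ 2 - t ^ 2) ^ (-(2 / ϑ))) ^ ϑ * y :=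
        stableMechanism_le ha hb hϑ hϑ₁ hy hE hyE
    _ ≤ a * (c₁ ^ ϑ / (A - t) ^ 2) * y := by gcongr; exact barrier_rpow_le hϑ hc₁ ht htA
    _ = a * c₁ ^ ϑ / (A - t) ^ 2 * y := by ring

end StableMechanism

theorem stable_gradient_estimate_general
    (a b ϑ A c₁ : ℝ) (ha : 0 < a) (hb : 0 < b) (hϑ₀ : 0 < ϑ) (hϑ₁ : ϑ ≤ 1)
    (hc₁ : 0 < c₁)
    (h : ℝ → ℝ)
    (heven : ∀ x : ℝ, |x| < A → h (-x) = h x)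
    (hsm : ∀ x ∈ Ioo (-A) A, ContDiffAt ℝ 2 h x)
    (hode : ∀ x : ℝ, |x| < A →
      (1 / 2) * deriv (deriv h) x = -a * h x + b * h x ^ (1 + ϑ))
    (hlow : ∀ x : ℝ, |x| < A → (a / b) ^ (1 / ϑ) ≤ h x)
    (hup : ∀ x : ℝ, |x| < A →
      h x ≤ (a / b) ^ (1 / ϑ) * (1 + c₁ * A ^ (2 / ϑ) * (A ^ 2 - x ^ 2) ^ (-(2 / ϑ)))) :
    MonotoneOn (deriv h) (Ioo (-A) A) ∧
    ∀ x : ℝ, 0 ≤ x → x < A →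
      0 ≤ deriv h x / h x ∧ deriv h x / h x ≤ 2 * a * c₁ ^ ϑ / (A - x) := by
  have hI : ∀ t ∈ Ioo (-A) A, |t| < A := fun t ht => abs_lt.2 ht
  have hsub : Ico 0 A ⊆ Ioo (-A) A := fun t ht => ⟨by linarith [ht.1, ht.2], ht.2⟩
  have hpos : ∀ t ∈ Ioo (-A) A, 0 < h t := fun t ht =>
    (Real.rpow_pos_of_pos (div_pos ha hb) _).trans_le (hlow t (hI t ht))
  have hh : ContDiffOn ℝ 2 h (Ioo (-A) A) := fun t ht => (hsm t ht).contDiffWithinAt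
  have hconvex : MonotoneOn (deriv h) (Ioo (-A) A) := by
    refine monotoneOn_deriv_of_deriv2_nonneg hh fun t ht => ?_
    have := stableMechanism_nonneg ha hb hϑ₀ (hlow t (hI t ht))
    rw [stableMechanism, ← hode t (hI t ht)] at this
    linarith
  have hh_mono : MonotoneOn h (Ico 0 A) :=
    monotoneOn_Ico_of_even_of_monotoneOn_deriv (hh.of_le (by norm_num)) heven hconvex
  have hh'' : ∀ t ∈ Ico 0 A, deriv (deriv h) t ≤ 2 * a * c₁ ^ ϑ * h t / (A - t) ^ 2 := by
    intro t ht
    have := stableMechanism_le_of_le_barrier ha hb hϑ₀ hϑ₁ hc₁.le ht.1 ht.2 (hpos t (hsub ht))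
      (hup t (hI t (hsub ht)))
    rw [stableMechanism, ← hode t (hI t (hsub ht))] at this
    calc deriv (deriv h) t = 2 * (1 / 2 * deriv (deriv h) t) := by ring
      _ ≤ 2 * (a * c₁ ^ ϑ / (A - t) ^ 2 * h t) := by gcongr
      _ = 2 * a * c₁ ^ ϑ * h t / (A - t) ^ 2 := by ring
  refine ⟨hconvex, fun x hx0 hxA => ?_⟩
  have hhx := hpos x (hsub ⟨hx0, hxA⟩)
  refine ⟨div_nonneg (deriv_nonneg_of_even_of_monotoneOn_deriv heven hconvex ⟨hx0, hxA⟩) hhx.le,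
    (div_le_iff₀ hhx).2 ?_⟩
  calc deriv h x ≤ 2 * a * c₁ ^ ϑ * h x / (A - x) :=
        deriv_le_of_deriv2_le_mul_div_sq hh heven hh_mono (by positivity) hh'' ⟨hx0, hxA⟩ hhx.le
    _ = 2 * a * c₁ ^ ϑ / (A - x) * h x := by ring

/-- Logarithmic gradient estimate for solutions of the stable ODE (Step 6 of Lemma 4.2):
if h is even, C², solves (1/2)h″ = −a h + b h^{1+ϑ} on (−A,A) and satisfies
(a/b)^{1/ϑ} ≤ h(x) ≤ (a/b)^{1/ϑ}(1 + c₁ A^{2/ϑ}(A² − x²)^{−2/ϑ}), then h′ is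
nondecreasing on (−A,A) and 0 ≤ h′(x)/h(x) ≤ 2 a c₁^ϑ/(A − x) for 0 ≤ x < A. -/
theorem stable_gradient_estimate
    (a b ϑ A c₁ : ℝ) (ha : 0 < a) (hb : 0 < b) (hϑ₀ : 0 < ϑ) (hϑ₁ : ϑ ≤ 1)
    (hA : 0 < A) (hc₁ : 0 < c₁)
    (h : ℝ → ℝ)
    (heven : ∀ x : ℝ, |x| < A → h (-x) = h x)
    (hsm : ∀ x ∈ Ioo (-A) A, ContDiffAt ℝ 2 h x)
    (hode : ∀ x : ℝ, |x| < A →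
      (1 / 2) * deriv (deriv h) x = -a * h x + b * h x ^ (1 + ϑ))
    (hlow : ∀ x : ℝ, |x| < A → (a / b) ^ (1 / ϑ) ≤ h x)
    (hup : ∀ x : ℝ, |x| < A →
      h x ≤ (a / b) ^ (1 / ϑ) * (1 + c₁ * A ^ (2 / ϑ) * (A ^ 2 - x ^ 2) ^ (-(2 / ϑ)))) :
    MonotoneOn (deriv h) (Ioo (-A) A) ∧
    ∀ x : ℝ, 0 ≤ x → x < A →
      0 ≤ deriv h x / h x ∧ deriv h x / h x ≤ 2 * a * c₁ ^ ϑ / (A - x) :=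
  stable_gradient_estimate_general a b ϑ A c₁ ha hb hϑ₀ hϑ₁ hc₁ h heven hsm hode hlow hup
end
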